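/- arXiv:2209.08213 — 5 statements merged into one kernel-verified Lean document; each statement's English description precedes it below -/
import Mathlib

section
/- Generalized transitivity of mixed strict/non-strict preference: let ≤ be a family of preorders indexed by variables, with strict parts <. If w R(X,Y,Z) u and u R(X',Y',Z') v, then w R(X∩X', Y∩Y', (Z∩Y')∪(Z∩Z')∪(Y∩Z')) v, where R(X,Y,Z) is the intersection of the equivalence relations ~_x for x∈X, the preorders ≤_y for y∈Y, and the strict orders <_z for z∈Z. -/
/-- strict part of the preorder `le z`. -/
def strictOf {W V : Type*} (le : V → W → W → Prop) (z : V) (w u : W) : Prop :=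
  le z w u ∧ ¬ le z u w

/-- `R(X,Y,Z)` : intersection of the equivalences `~x (x∈X)`, preorders `≤y (y∈Y)`
and strict orders `<z (z∈Z)`. -/
def R {W V : Type*} (sim le : V → W → W → Prop) (X Y Z : Finset V) (w u : W) : Prop :=
  (∀ x ∈ X, sim x w u) ∧ (∀ y ∈ Y, le y w u) ∧ (∀ z ∈ Z, strictOf le z w u)

/-- Generalized transitivity of mixed strict/non-strict preference in an RPD-frame. -/
theorem generalized_transitivity {W V : Type*} [DecidableEq V]
    (sim le : V → W → W → Prop)
    (hsim : ∀ x, Equivalence (sim x))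
    (hrefl : ∀ y w, le y w w) (htrans : ∀ y, Transitive (le y))
    (X Y Z X' Y' Z' : Finset V) (w u v : W)
    (h1 : R sim le X Y Z w u) (h2 : R sim le X' Y' Z' u v) :
    R sim le (X ∩ X') (Y ∩ Y') ((Z ∩ Y') ∪ (Z ∩ Z') ∪ (Y ∩ Z')) w v := by
  obtain ⟨s1, l1, t1⟩ := h1
  obtain ⟨s2, l2, t2⟩ := h2
  refine ⟨?_, ?_, ?_⟩
  · intro x hx
    rw [Finset.mem_inter] at hx
    exact (hsim x).trans (s1 x hx.1) (s2 x hx.2)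
  · intro y hy
    rw [Finset.mem_inter] at hy
    exact htrans y (l1 y hy.1) (l2 y hy.2)
  · intro z hz
    simp only [Finset.mem_union, Finset.mem_inter] at hz
    rcases hz with (⟨hz1, hz2⟩ | ⟨hz1, hz2⟩) | ⟨hz1, hz2⟩
    · obtain ⟨hle, hnle⟩ := t1 z hz1
      exact ⟨htrans z hle (l2 z hz2), fun h => hnle (htrans z (l2 z hz2) h)⟩
    · obtain ⟨hle, hnle⟩ := t1 z hz1
      exact ⟨htrans z hle (t2 z hz2).1, fun h => hnle (htrans z (t2 z hz2).1 h)⟩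
    · obtain ⟨hle, hnle⟩ := t2 z hz2
      exact ⟨htrans z (l1 z hz1) hle, fun h => hnle (htrans z h (l1 z hz1))⟩
end

section
/- Validity of axiom (Ord,e): in an RPD-frame, if u ∈ R(X,Y,Z)(w), then either u ∈ R(X,Y,Z)(w) with w ∈ R(X,Y,∅)(u), or there exists y ∈ Y such that u ∈ R(X,Y,Z∪{y})(w). -/
/-- Validity of axiom (Ord,e): if `u ∈ R(X,Y,Z)(w)` then either `u ∈ R(X,Y,Z)(w)`
with `w ∈ R(X,Y,∅)(u)`, or there is `y ∈ Y` with `u ∈ R(X,Y,Z∪{y})(w)`. -/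
theorem ord_e_valid {W V : Type*} [DecidableEq V] (sim le : V → W → W → Prop)
    (hsim : ∀ x, Equivalence (sim x))
    (hrefl : ∀ y w, le y w w) (htrans : ∀ y, Transitive (le y))
    (X Y Z : Finset V) (w u : W) (h : R sim le X Y Z w u) :
    (R sim le X Y Z w u ∧ R sim le X Y ∅ u w) ∨
    (∃ y ∈ Y, R sim le X Y (Z ∪ {y}) w u) := by
  by_cases hc : ∀ y ∈ Y, le y u w
  · left
    refine ⟨h, ?_, ?_, ?_⟩
    · exact fun x hx => (hsim x).symm (h.1 x hx)
    · exact hc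
    · intro z hz; simp at hz
  · right
    push_neg at hc
    obtain ⟨y, hy, hne⟩ := hc
    refine ⟨y, hy, h.1, h.2.1, ?_⟩
    intro z hz
    rcases Finset.mem_union.mp hz with hz | hz
    · exact h.2.2 z hz
    · rw [Finset.mem_singleton] at hz
      subst hz
      exact ⟨h.2.1 z hy, hne⟩
end

section
/- Every PD-model can be transformed into an RPD-model satisfying the same formulas: given a PD-model M = (O, I, A, ⪯), the structure with domain A, relations ~_x := =_x and ≤_x := ⪯_x, and valuation V(P x⃗) = {a ∈ A : a(x⃗) ∈ I(P)} is an RPD-model (in particular the valuation satisfies: if a =_{set(x⃗)} a' then a ∈ V(P x⃗) iff a' ∈ V(P x⃗)), and truth of every formula is preserved pointwise. -/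
/-- Formulas of LPFD: predicates applied to strings of variables, dependence atoms,
negation, conjunction, and the ceteris paribus modality `⟨X,Y,Z⟩`. -/
inductive Fml (V P : Type*) where
  | pred : P → List V → Fml V P
  | dep : Finset V → V → Fml V P
  | neg : Fml V P → Fml V P
  | conj : Fml V P → Fml V P → Fml V P
  | box : Finset V → Finset V → Finset V → Fml V P → Fml V P

/-- Truth in a PD-model `(O, I, A, pre)` at an assignment. -/
def pdSat {V P O : Type*} (I : P → List O → Prop) (A : Set (V → O))
    (pre : V → (V → O) → (V → O) → Prop) : (V → O) → Fml V P → Prop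
  | a, .pred p xs => I p (xs.map a)
  | a, .dep X y => ∀ b ∈ A, (∀ x ∈ X, a x = b x) → a y = b y
  | a, .neg φ => ¬ pdSat I A pre a φ
  | a, .conj φ ψ => pdSat I A pre a φ ∧ pdSat I A pre a ψ
  | a, .box X Y Z φ => ∀ b ∈ A, (∀ x ∈ X, a x = b x) → (∀ y ∈ Y, pre y a b) →
      (∀ z ∈ Z, pre z a b ∧ ¬ pre z b a) → pdSat I A pre b φ

/-- Truth in an RPD-model `(W, sim, le, Val)` at a point. -/
def rSat {V P W : Type*} (sim le : V → W → W → Prop) (Val : P → List V → Set W) :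
    W → Fml V P → Prop
  | w, .pred p xs => w ∈ Val p xs
  | w, .dep X y => ∀ v, (∀ x ∈ X, sim x w v) → sim y w v
  | w, .neg φ => ¬ rSat sim le Val w φ
  | w, .conj φ ψ => rSat sim le Val w φ ∧ rSat sim le Val w ψ
  | w, .box X Y Z φ => ∀ v, (∀ x ∈ X, sim x w v) → (∀ y ∈ Y, le y w v) →
      (∀ z ∈ Z, le z w v ∧ ¬ le z v w) → rSat sim le Val v φ

/-- Every PD-model yields an RPD-model on domain `A` with `~x` = agreement on `x`,
`≤x` = `⪯x`, and `V(P x⃗) = {a : a(x⃗) ∈ I(P)}`; this valuation satisfies (Val) and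
truth of every formula is preserved pointwise. -/
theorem pd_to_rpd {V P O : Type*} (I : P → List O → Prop) (A : Set (V → O))
    (pre : V → (V → O) → (V → O) → Prop)
    (hrefl : ∀ x, ∀ a ∈ A, pre x a a)
    (htrans : ∀ x, ∀ a ∈ A, ∀ b ∈ A, ∀ c ∈ A, pre x a b → pre x b c → pre x a c) :
    (∀ x : V, Equivalence (fun a b : ↥A => (a : V → O) x = (b : V → O) x)) ∧
    (∀ (x : V) (a : ↥A), pre x (a : V → O) (a : V → O)) ∧
    (∀ (x : V) (a b c : ↥A), pre x (a : V → O) (b : V → O) →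
      pre x (b : V → O) (c : V → O) → pre x (a : V → O) (c : V → O)) ∧
    (∀ (p : P) (xs : List V) (a b : ↥A), (∀ x ∈ xs, (a : V → O) x = (b : V → O) x) →
      (I p (xs.map (a : V → O)) ↔ I p (xs.map (b : V → O)))) ∧
    (∀ (φ : Fml V P) (a : ↥A),
      pdSat I A pre (a : V → O) φ ↔
      rSat (fun x (a b : ↥A) => (a : V → O) x = (b : V → O) x)
           (fun x (a b : ↥A) => pre x (a : V → O) (b : V → O))
           (fun p xs => {a : ↥A | I p (xs.map (a : V → O))}) a φ) := by
  refine ⟨fun x => ⟨fun a => rfl, fun h => h.symm, fun h h' => h.trans h'⟩,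
    fun x a => hrefl x a a.2,
    fun x a b c => htrans x a a.2 b b.2 c c.2,
    fun p xs a b h => by
      have : xs.map (a : V → O) = xs.map (b : V → O) := List.map_congr_left h
      rw [this],
    fun φ => ?_⟩
  induction φ with
  | pred p xs => intro a; rfl
  | dep X y =>
    intro a
    constructor
    · intro h v hv; exact h v v.2 hv
    · intro h b hb hagree; exact h ⟨b, hb⟩ hagree
  | neg φ ih => intro a; simp [pdSat, rSat, ih a]
  | conj φ ψ ih1 ih2 => intro a; simp [pdSat, rSat, ih1 a, ih2 a]
  | box X Y Z φ ih =>
    intro a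
    constructor
    · intro h v h1 h2 h3
      exact (ih v).mp (h v v.2 h1 h2 h3)
    · intro h b hb h1 h2 h3
      exact (ih ⟨b, hb⟩).mpr (h ⟨b, hb⟩ h1 h2 h3)
end

section
/- LPFD lacks the finite model property: there is a point w in the RPD-frame (ω, ~, ≤) (with ≤_z the usual order on ω) at which the formula ¬([∅,∅,{z}]⊥ ∨ ⟨∅,∅,{z}⟩[∅,∅,{z}]⊥) holds, whereas on every finite RPD-frame, at every point, [∅,∅,{z}]⊥ ∨ ⟨∅,∅,{z}⟩[∅,∅,{z}]⊥ holds. Equivalently: if < is an irreflexive transitive relation on a finite nonempty set W, then every point either has no <-successor or has a <-successor with no <-successor; while on (ω, <) there is a point with a successor but such that every successor has a successor. -/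
/-- LPFD lacks the finite model property: on every finite frame with an irreflexive
transitive relation, every point has no successor or has a successor with no
successor (so `[∅,∅,{z}]⊥ ∨ ⟨∅,∅,{z}⟩[∅,∅,{z}]⊥` is valid on finite frames);
whereas on `(ω, <)` some point falsifies it: it has a successor, and all of its
successors have successors. -/
theorem lpfd_no_fmp :
    (∀ (W : Type) [Fintype W] (r : W → W → Prop),
      (∀ w, ¬ r w w) → Transitive r →
      ∀ w : W, (¬ ∃ u, r w u) ∨ ∃ u, r w u ∧ ¬ ∃ v, r u v) ∧
    (∃ w : ℕ, (∃ u, w < u) ∧ ∀ u, w < u → ∃ v, u < v) := by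
  constructor
  · intro W _ r hirr htrans w
    by_cases h : ∃ u, r w u
    · right
      have hwf : WellFounded (fun a b => r b a) :=
        have : IsTrans W (fun a b => r b a) := ⟨fun a b c hab hbc => htrans hbc hab⟩
        have : IsIrrefl W (fun a b => r b a) := ⟨fun a ha => hirr a ha⟩
        Finite.wellFounded_of_trans_of_irrefl _
      obtain ⟨u, hu, hmin⟩ := hwf.has_min {u | r w u} h
      exact ⟨u, hu, fun ⟨v, hv⟩ => hmin v (htrans hu hv) hv⟩
    · exact Or.inl h
  · exact ⟨0, ⟨1, by omega⟩, fun u _ => ⟨u + 1, by omega⟩⟩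
end

section
/- In a real CPD-model, for any realizable profile a ∈ A and nonempty X ⊆ N: X ∈ a_dom if and only if (for every i ∈ X, all a' ∈ A with a' =_i a satisfy a' =_X a) and (for every j ∉ X, there exists a' ∈ A with a' =_X a but a' ≠_j a). -/
def dom {N S : Type*} (f : N → Option S) : Set N := {i | f i ≠ none}

def merge {N S : Type*} (a : N → N → Option S) : N → Option S := fun i => a i i

def domset {N S : Type*} (a : N → N → Option S) : Set (Set N) :=
  Set.range fun i => dom (a i)

def Realizable {N S : Type*} (a : N → N → Option S) : Prop :=
  (∀ i, i ∈ dom (a i)) ∧ (∀ i j, j ∈ dom (a i) → dom (a i) = dom (a j)) ∧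
  (∀ i j, dom (a i) = dom (a j) → a i = a j)

def IsPartition {N : Type*} (π : Set (Set N)) : Prop :=
  (∀ B ∈ π, B ≠ ∅) ∧ ⋃₀ π = Set.univ ∧ ∀ B ∈ π, ∀ C ∈ π, B ≠ C → B ∩ C = ∅

def Finer {N : Type*} (π π' : Set (Set N)) : Prop := ∀ B ∈ π, ∃ C ∈ π', B ⊆ C

def sigmaA {N S : Type*} (A : Set (N → N → Option S)) (π : Set (Set N)) :
    Set (N → Option S) :=
  {m | ∃ a ∈ A, domset a = π ∧ merge a = m}

lemma real_eq {N S : Type*} {a : N → N → Option S} (h : Realizable a)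
    {i k : N} (hk : k ∈ dom (a i)) : a i = a k :=
  h.2.2 i k (h.2.1 i k hk)

lemma block_dom {N S : Type*} {a : N → N → Option S} (h : Realizable a)
    {Y : Set N} (hY : Y ∈ domset a) {i : N} (hi : i ∈ Y) : dom (a i) = Y := by
  obtain ⟨i0, rfl⟩ := hY
  exact (h.2.1 i0 i hi).symm

lemma coarsen {N S : Type*} {A : Set (N → N → Option S)}
    (h1 : ∀ a ∈ A, Realizable a)
    (h2 : ∀ π : Set (Set N), (∃ a ∈ A, domset a = π) ↔ IsPartition π)
    (h3 : ∀ π π' : Set (Set N), IsPartition π → IsPartition π' → Finer π π' →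
      sigmaA A π ⊆ sigmaA A π')
    {a : N → N → Option S} (ha : a ∈ A) {Y : Set N}
    (hY : Y ∈ domset a) (hYc : (Yᶜ : Set N).Nonempty) :
    ∃ b ∈ A, domset b = {Y, Yᶜ} ∧ (∀ i ∈ Y, b i = a i) := by
  have hra := h1 a ha
  have hpart : IsPartition (domset a) := (h2 _).mp ⟨a, ha, rfl⟩
  have hYne : Y.Nonempty := by
    obtain ⟨i0, rfl⟩ := hY
    exact ⟨i0, hra.1 i0⟩
  have hpart' : IsPartition ({Y, Yᶜ} : Set (Set N)) := by
    refine ⟨?_, ?_, ?_⟩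
    · rintro B hB
      simp only [Set.mem_insert_iff, Set.mem_singleton_iff] at hB
      rcases hB with rfl | rfl
      · exact hYne.ne_empty
      · exact hYc.ne_empty
    · rw [Set.sUnion_pair, Set.union_compl_self]
    · intro B hB C hC hBC
      simp only [Set.mem_insert_iff, Set.mem_singleton_iff] at hB hC
      rcases hB with rfl | rfl <;> rcases hC with rfl | rfl
      · exact absurd rfl hBC
      · exact Set.inter_compl_self B
      · exact Set.compl_inter_self C
      · exact absurd rfl hBC
  have hfiner : Finer (domset a) ({Y, Yᶜ} : Set (Set N)) := by
    intro B hB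
    by_cases hBY : B = Y
    · exact ⟨Y, Set.mem_insert _ _, hBY.le⟩
    · refine ⟨Yᶜ, Set.mem_insert_of_mem _ rfl, ?_⟩
      have hdisj : B ∩ Y = ∅ := hpart.2.2 B hB Y hY hBY
      intro x hx hxY
      exact absurd (Set.mem_inter hx hxY) (by rw [hdisj]; exact id)
  obtain ⟨b, hb, hdomb, hmerge⟩ :=
    h3 (domset a) ({Y, Yᶜ} : Set (Set N)) hpart hpart' hfiner ⟨a, ha, rfl, rfl⟩
  have hrb := h1 b hb
  have hYb : Y ∈ domset b := by rw [hdomb]; exact Set.mem_insert _ _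
  refine ⟨b, hb, hdomb, ?_⟩
  intro i hi
  have hdbi : dom (b i) = Y := block_dom hrb hYb hi
  have hdai : dom (a i) = Y := block_dom hra hY hi
  funext k
  by_cases hk : k ∈ Y
  · have e1 : b i = b k := real_eq hrb (by rw [hdbi]; exact hk)
    have e2 : a i = a k := real_eq hra (by rw [hdai]; exact hk)
    have e3 : b k k = a k k := congrFun hmerge k
    rw [e1, e2, e3]
  · have e1 : b i k = none := by
      have : k ∉ dom (b i) := by rw [hdbi]; exact hk
      simpa [dom] using this
    have e2 : a i k = none := by
      have : k ∉ dom (a i) := by rw [hdai]; exact hk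
      simpa [dom] using this
    rw [e1, e2]

/-- In a real CPD-model (no coalition fully determines the choice of its complement),
`X ∈ a_dom` iff every `i ∈ X` functionally determines `X` (`D_i X`) and no `j ∉ X` is
determined by `X` (`¬ D_X j`). -/
theorem coalition_membership_characterization {N S : Type*} [Fintype N]
    (A : Set (N → N → Option S))
    (h1 : ∀ a ∈ A, Realizable a)
    (h2 : ∀ π : Set (Set N), (∃ a ∈ A, domset a = π) ↔ IsPartition π)
    (h3 : ∀ π π' : Set (Set N), IsPartition π → IsPartition π' → Finer π π' →
      sigmaA A π ⊆ sigmaA A π')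
    (hreal : ∀ a ∈ A, ∀ X : Set N, domset a = {X, Xᶜ} →
      ∃ a' ∈ A, (∀ i ∈ X, a' i = a i) ∧ ∃ j ∈ Xᶜ, a' j ≠ a j) :
    ∀ a ∈ A, ∀ X : Set N, X ≠ ∅ →
      (X ∈ domset a ↔
        ((∀ i ∈ X, ∀ a' ∈ A, a' i = a i → ∀ k ∈ X, a' k = a k) ∧
         (∀ j ∉ X, ∃ a' ∈ A, (∀ k ∈ X, a' k = a k) ∧ a' j ≠ a j))) := by
  intro a ha X hX
  have hra := h1 a ha
  constructor
  · intro hXdom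
    constructor
    · intro i hi a' ha' hai k hk
      have hra' := h1 a' ha'
      have hdi : dom (a i) = X := block_dom hra hXdom hi
      have hdi' : dom (a' i) = X := by rw [hai]; exact hdi
      have e1 : a' i = a' k := real_eq hra' (by rw [hdi']; exact hk)
      have e2 : a i = a k := real_eq hra (by rw [hdi]; exact hk)
      rw [← e1, hai, e2]
    · intro j hj
      by_cases hcase : dom (a j) = Xᶜ
      · have hXc : Xᶜ ∈ domset a := ⟨j, hcase⟩
        have hdomeq : domset a = {X, Xᶜ} := by
          apply Set.Subset.antisymm
          · rintro B ⟨i, rfl⟩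
            by_cases hiX : i ∈ X
            · exact Set.mem_insert_iff.mpr (Or.inl (block_dom hra hXdom hiX))
            · exact Set.mem_insert_iff.mpr (Or.inr (block_dom hra hXc hiX))
          · intro B hB
            simp only [Set.mem_insert_iff, Set.mem_singleton_iff] at hB
            rcases hB with rfl | rfl
            · exact hXdom
            · exact hXc
        obtain ⟨a', ha', hagree, j0, hj0, hne⟩ := hreal a ha X hdomeq
        refine ⟨a', ha', hagree, ?_⟩
        intro heq
        apply hne
        have hra' := h1 a' ha'
        have hXc' : Xᶜ ∈ domset a' := ⟨j, show dom (a' j) = Xᶜ by rw [heq]; exact hcase⟩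
        have e1 : a' j0 = a' j := real_eq hra' (by rw [block_dom hra' hXc' hj0]; exact hj)
        have e2 : a j0 = a j := real_eq hra (by rw [block_dom hra hXc hj0]; exact hj)
        rw [e1, heq, ← e2]
      · obtain ⟨b, hb, hdomb, hagree⟩ := coarsen h1 h2 h3 ha hXdom ⟨j, hj⟩
        refine ⟨b, hb, hagree, ?_⟩
        intro heq
        apply hcase
        have hXcb : Xᶜ ∈ domset b := by
          rw [hdomb]; exact Set.mem_insert_of_mem _ rfl
        have : dom (b j) = Xᶜ := block_dom (h1 b hb) hXcb hj
        rw [← heq]; exact this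
  · rintro ⟨hD, hnD⟩
    obtain ⟨i0, hi0⟩ := Set.nonempty_iff_ne_empty.mpr hX
    set Y := dom (a i0) with hYdef
    have hYdom : Y ∈ domset a := ⟨i0, rfl⟩
    have hi0Y : i0 ∈ Y := hra.1 i0
    have hYX : Y ⊆ X := by
      intro j hjY
      by_contra hjX
      obtain ⟨a', ha', hagr, hne⟩ := hnD j hjX
      apply hne
      have e0 : a' i0 = a i0 := hagr i0 hi0
      have e1 : a' i0 = a' j := real_eq (h1 a' ha') (by rw [e0]; exact hjY)
      have e2 : a i0 = a j := real_eq hra hjY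
      rw [← e1, e0, e2]
    have hXY : X ⊆ Y := by
      intro k hk
      by_contra hkY
      obtain ⟨b, hb, hdomb, hagr⟩ := coarsen h1 h2 h3 ha hYdom ⟨k, hkY⟩
      have hrb := h1 b hb
      have hbk : b k = a k := hD i0 hi0 b hb (hagr i0 hi0Y) k hk
      obtain ⟨a', ha', hagr', j0, hj0, hne⟩ := hreal b hb Y hdomb
      apply hne
      have hra' := h1 a' ha'
      have ea : a' i0 = a i0 := by rw [hagr' i0 hi0Y, hagr i0 hi0Y]
      have hak : a' k = a k := hD i0 hi0 a' ha' ea k hk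
      have hYcb : Yᶜ ∈ domset b := by rw [hdomb]; exact Set.mem_insert_of_mem _ rfl
      have hdbk : dom (b k) = Yᶜ := block_dom hrb hYcb hkY
      have hYc' : Yᶜ ∈ domset a' := ⟨k, show dom (a' k) = Yᶜ by rw [hak, ← hbk]; exact hdbk⟩
      have e1 : a' j0 = a' k := real_eq hra' (by rw [block_dom hra' hYc' hj0]; exact hkY)
      have e2 : b j0 = b k := real_eq hrb (by rw [block_dom hrb hYcb hj0]; exact hkY)
      rw [e1, e2, hak, hbk]
    have hXYeq : X = Y := Set.Subset.antisymm hXY hYX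
    rw [hXYeq]
    exact hYdom
end
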